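/- Let A be self-adjoint and bounded below, let V be a bounded nonnegative potential with A + V self-adjoint on the same domain, and suppose for some a > 0 and integer k ≥ 1 the difference (A+V+a)^{−k} − (A+a)^{−k} lies in 𝒥_p for some 0 < p ≤ 1. Then for any compact interval [a₀,b] with b > −a, ∫_{a₀}^b |ξ(λ; A+V, A)|^{1/p} dλ ≤ k^{−1}(b+a)^{k+1} ∫_ℝ |ξ(t; (A+V+a)^{−k}, (A+a)^{−k})|^{1/p} dt, where ξ(λ; A+V, A) = −ξ((λ+a)^{−k}; (A+V+a)^{−k}, (A+a)^{−k}). -/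

import Mathlib

/-!
Substitute `t = (λ + a) ^ (-k)`, which is injective on `(a₀, b]`. Its Jacobian
`k (λ + a) ^ (-k-1)` is at least `k (b + a) ^ (-(k+1))` there, so the integral over `(a₀, b]`
is at most `k⁻¹ (b + a) ^ (k+1)` times the integral over the image, hence over `ℝ`.
-/

open MeasureTheory Set

theorem setLIntegral_comp_le_mul_lintegral_of_one_le_mul_abs_deriv {s : Set ℝ} {f f' : ℝ → ℝ}
    (hs : MeasurableSet s) (hf' : ∀ x ∈ s, HasDerivWithinAt f (f' x) s x) (hf : InjOn f s)
    {C : ℝ} (hC : ∀ x ∈ s, 1 ≤ C * |f' x|) (g : ℝ → ENNReal) :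
    ∫⁻ x in s, g (f x) ≤ ENNReal.ofReal C * ∫⁻ y, g y := by
  have hpointwise : ∀ x ∈ s,
      g (f x) ≤ ENNReal.ofReal C * (ENNReal.ofReal |f' x| * g (f x)) := fun x hx =>
    calc g (f x) = 1 * g (f x) := (one_mul _).symm
      _ ≤ ENNReal.ofReal (C * |f' x|) * g (f x) := by
          gcongr
          exact ENNReal.one_le_ofReal.2 (hC x hx)
      _ = _ := by rw [ENNReal.ofReal_mul' (abs_nonneg _), mul_assoc]
  calc ∫⁻ x in s, g (f x)
      ≤ ∫⁻ x in s, ENNReal.ofReal C * (ENNReal.ofReal |f' x| * g (f x)) :=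
        setLIntegral_mono' hs hpointwise
    _ = ENNReal.ofReal C * ∫⁻ y in f '' s, g y := by
        rw [lintegral_const_mul' _ _ ENNReal.ofReal_ne_top,
          lintegral_image_eq_lintegral_abs_deriv_mul hs hf' hf]
    _ ≤ ENNReal.ofReal C * ∫⁻ y, g y := by
        gcongr
        exact Measure.restrict_le_self

theorem one_le_inv_mul_pow_succ_mul_abs_neg_mul_rpow {k : ℕ} (hk : k ≠ 0) {x c : ℝ}
    (hx : 0 < x) (hxc : x ≤ c) :
    1 ≤ (k : ℝ)⁻¹ * c ^ (k + 1) * |-(k : ℝ) * x ^ (-(k : ℝ) - 1)| := by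
  have hk₀ : (0 : ℝ) < k := by positivity
  have hrpow : x ^ (-(k : ℝ) - 1) = (x ^ (k + 1))⁻¹ := by
    rw [show -(k : ℝ) - 1 = -((k + 1 : ℕ) : ℝ) by push_cast; ring, Real.rpow_neg hx.le,
      Real.rpow_natCast]
  have hpow : x ^ (k + 1) ≤ c ^ (k + 1) := pow_le_pow_left₀ hx.le hxc _
  rw [hrpow, abs_mul, abs_neg, abs_of_pos hk₀, abs_of_pos (by positivity)]
  field_simp
  exact hpow

theorem invariance_principle_change_of_variables_estimate_general
    (η : ℝ → ℝ) (a : ℝ)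
    (k : ℕ) (hk : 1 ≤ k) (p : ℝ)
    (a₀ b : ℝ) (ha₀ : -a < a₀)
    (ξ : ℝ → ℝ) (hξ : ∀ lam : ℝ, ξ lam = -η ((lam + a) ^ (-(k : ℝ)))) :
    (∫⁻ lam in Set.Ioc a₀ b, ENNReal.ofReal (|ξ lam| ^ (1 / p))) ≤
      ENNReal.ofReal ((k : ℝ)⁻¹ * (b + a) ^ (k + 1)) *
        ∫⁻ t, ENNReal.ofReal (|η t| ^ (1 / p)) := by
  have hpos : ∀ x ∈ Ioc a₀ b, 0 < x + a := fun x hx => by linarith [hx.1]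
  have hderiv : ∀ x ∈ Ioc a₀ b, HasDerivWithinAt (fun y => (y + a) ^ (-(k : ℝ)))
      (-(k : ℝ) * (x + a) ^ (-(k : ℝ) - 1)) (Ioc a₀ b) x := fun x hx =>
    (((hasDerivAt_id' x).add_const a).rpow_const (Or.inl (hpos x hx).ne')).hasDerivWithinAt
      |>.congr_deriv (by ring)
  have hinj : InjOn (fun y => (y + a) ^ (-(k : ℝ))) (Ioc a₀ b) :=
    StrictAntiOn.injOn fun x hx y _ hxy =>
      Real.rpow_lt_rpow_of_neg (hpos x hx) (by linarith) (by simp; omega)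
  simp_rw [hξ, abs_neg]
  exact setLIntegral_comp_le_mul_lintegral_of_one_le_mul_abs_deriv measurableSet_Ioc hderiv hinj
    (fun x hx => one_le_inv_mul_pow_succ_mul_abs_neg_mul_rpow (by omega) (hpos x hx)
      (by linarith [hx.2]))
    (fun t => ENNReal.ofReal (|η t| ^ (1 / p)))

/-- The change-of-variables estimate behind the invariance principle: if
`ξ(λ) = -η((λ+a)^{-k})` (so `|ξ(λ)| = |η((λ+a)^{-k})|`), then
`∫_{a₀}^b |ξ(λ)|^{1/p} dλ ≤ k⁻¹ (b+a)^{k+1} ∫_ℝ |η(t)|^{1/p} dt`. -/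
theorem invariance_principle_change_of_variables_estimate
    (η : ℝ → ℝ) (hη : Measurable η) (a : ℝ) (ha : 0 < a)
    (k : ℕ) (hk : 1 ≤ k) (p : ℝ) (hp0 : 0 < p) (hp1 : p ≤ 1)
    (a₀ b : ℝ) (ha₀ : -a < a₀) (hb : a₀ ≤ b)
    (ξ : ℝ → ℝ) (hξ : ∀ lam : ℝ, ξ lam = -η ((lam + a) ^ (-(k : ℝ)))) :
    (∫⁻ lam in Set.Ioc a₀ b, ENNReal.ofReal (|ξ lam| ^ (1 / p))) ≤
      ENNReal.ofReal ((k : ℝ)⁻¹ * (b + a) ^ (k + 1)) *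
        ∫⁻ t, ENNReal.ofReal (|η t| ^ (1 / p)) :=
  invariance_principle_change_of_variables_estimate_general η a k hk p a₀ b ha₀ ξ hξ
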